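/- arXiv:2507.06344 — 3 statements merged into one kernel-verified Lean document; each statement's English description precedes it below -/
import Mathlib

section
/- Let V be an n×n complex matrix with Vᴴ = V and V² = I (a Hermitian involution), let H be an arbitrary n×n complex matrix, and define U(t) := exp(−i(t/2)V) ∈ M_n(ℂ). Then the commutator satisfies [V, H] = i·( U(π/2)·H·U(−π/2) − U(−π/2)·H·U(π/2) ). -/
/-!
Since `V * V = 1`, the even and odd parts of the exponential series of `c • V` sum to
`cosh c • 1` and `sinh c • V`, so `U t = cos (t/2) • 1 - (i sin (t/2)) • V`. Expanding the two
conjugations, the terms not involving a commutator cancel, leaving `2 cos (π/4) · i sin (π/4)`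
times `[H, V]`, and `2 sin (π/4) cos (π/4) = sin (π/2) = 1`.
-/

open Matrix Real

section

variable {𝔸 : Type*} [Ring 𝔸] [Algebra ℂ 𝔸] [TopologicalSpace 𝔸] [IsTopologicalRing 𝔸]
  [ContinuousSMul ℂ 𝔸] [T2Space 𝔸]

theorem NormedSpace.exp_smul_of_mul_self_eq_one {x : 𝔸} (hx : x * x = 1) (c : ℂ) :
    NormedSpace.exp (c • x) = Complex.cosh c • (1 : 𝔸) + Complex.sinh c • x := by
  have hpow_even (n : ℕ) : x ^ (2 * n) = 1 := by rw [pow_mul, sq, hx, one_pow]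
  rw [NormedSpace.exp_eq_tsum ℂ]
  refine HasSum.tsum_eq (HasSum.even_add_odd ?_ ?_)
  · convert (Complex.hasSum_cosh c).smul_const (1 : 𝔸) using 2 with n
    rw [smul_pow, hpow_even, smul_smul, div_eq_inv_mul]
  · convert (Complex.hasSum_sinh c).smul_const x using 2 with n
    rw [smul_pow, pow_succ x, hpow_even, one_mul, smul_smul, div_eq_inv_mul]

theorem NormedSpace.exp_neg_I_mul_smul_of_mul_self_eq_one {x : 𝔸} (hx : x * x = 1) (θ : ℂ) :
    NormedSpace.exp ((-Complex.I * θ) • x)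
      = Complex.cos θ • (1 : 𝔸) - (Complex.I * Complex.sin θ) • x := by
  rw [NormedSpace.exp_smul_of_mul_self_eq_one hx, neg_mul, Complex.cosh_neg, Complex.sinh_neg,
    mul_comm, Complex.cosh_mul_I, Complex.sinh_mul_I, neg_smul, sub_eq_add_neg, mul_comm]

end

theorem smul_sub_smul_mul_mul_add_sub {R A : Type*} [CommRing R] [Ring A] [Algebra R A]
    (a b : R) (x y : A) :
    (a • 1 - b • x) * y * (a • 1 + b • x) - (a • 1 + b • x) * y * (a • 1 - b • x)
      = (2 * a * b) • (y * x - x * y) := by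
  simp only [add_mul, mul_add, sub_mul, mul_sub, smul_mul_assoc, mul_smul_comm, one_mul, mul_one]
  module

theorem Complex.two_mul_sin_mul_cos_pi_div_four : 2 * sin (π / 4) * cos (π / 4) = 1 := by
  rw [← sin_two_mul, show 2 * (π / 4 : ℂ) = π / 2 by ring, sin_pi_div_two]

theorem stmt0_general (n : ℕ) (V H : Matrix (Fin n) (Fin n) ℂ)
    (hVinv : V * V = 1)
    (U : ℝ → Matrix (Fin n) (Fin n) ℂ)
    (hU : ∀ t : ℝ, U t = NormedSpace.exp ((-Complex.I * ((t : ℂ) / 2)) • V)) :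
    V * H - H * V =
      Complex.I •
        (U (π / 2) * H * U (-(π / 2)) - U (-(π / 2)) * H * U (π / 2)) := by
  set a := Complex.cos (π / 4)
  set b := Complex.I * Complex.sin (π / 4)
  have hU_pos : U (π / 2) = a • 1 - b • V := by
    rw [hU, show ((π / 2 : ℝ) : ℂ) / 2 = π / 4 by push_cast; ring,
      NormedSpace.exp_neg_I_mul_smul_of_mul_self_eq_one hVinv]
  have hU_neg : U (-(π / 2)) = a • 1 + b • V := by
    rw [hU, show ((-(π / 2) : ℝ) : ℂ) / 2 = -(π / 4) by push_cast; ring,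
      NormedSpace.exp_neg_I_mul_smul_of_mul_self_eq_one hVinv, Complex.cos_neg, Complex.sin_neg,
      mul_neg, neg_smul, sub_neg_eq_add]
  have hab : Complex.I * (2 * a * b) = -1 := by
    linear_combination Complex.I_sq + Complex.I ^ 2 * Complex.two_mul_sin_mul_cos_pi_div_four
  rw [hU_pos, hU_neg, smul_sub_smul_mul_mul_add_sub, smul_smul, hab, neg_one_smul, neg_sub]

/-- Let `V` be an `n × n` complex Hermitian involution (`Vᴴ = V`, `V² = 1`),
let `H` be an arbitrary `n × n` complex matrix, and define `U t := exp (−i (t/2) V)`.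
Then `[V, H] = i • (U(π/2) H U(−π/2) − U(−π/2) H U(π/2))`. -/
theorem stmt0 (n : ℕ) (V H : Matrix (Fin n) (Fin n) ℂ)
    (hVherm : Vᴴ = V) (hVinv : V * V = 1)
    (U : ℝ → Matrix (Fin n) (Fin n) ℂ)
    (hU : ∀ t : ℝ, U t = NormedSpace.exp ((-Complex.I * ((t : ℂ) / 2)) • V)) :
    V * H - H * V =
      Complex.I •
        (U (π / 2) * H * U (-(π / 2)) - U (-(π / 2)) * H * U (π / 2)) :=
  stmt0_general n V H hVinv U hU
end

section
/- For every θ ∈ ℝ^D and every k ∈ {1,…,D}, the cost function of a PQC satisfies the parameter-shift rule ∂_{θ_k} C(θ) = (1/2)·( C(θ + (π/2)e_k) − C(θ − (π/2)e_k) ), where e_k is the k-th standard basis vector of ℝ^D. -/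
/-!
Along the coordinate line through `θ` in direction `e_k`, only the `k`-th gate varies, and since
`V_k² = 1` it equals `cos (t/2) W_k - i sin (t/2) V_k W_k`. The state is therefore
`cos (t/2) x - i sin (t/2) y` for fixed vectors `x, y`, so the cost restricted to that line has the
form `a + b cos t + c sin t`. For such a function the derivative at `t` is exactly
`(f (t + π/2) - f (t - π/2)) / 2`.
-/

open Matrix Real Function

def IsDegreeOneTrigPoly (f : ℝ → ℝ) : Prop :=
  ∃ a b c : ℝ, ∀ t, f t = a + b * cos t + c * sin t

theorem IsDegreeOneTrigPoly.hasDerivAt_shift {f : ℝ → ℝ} (hf : IsDegreeOneTrigPoly f) (t : ℝ) :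
    HasDerivAt f ((f (t + π / 2) - f (t - π / 2)) / 2) t := by
  obtain ⟨a, b, c, hf⟩ := hf
  rw [hf (t + π / 2), hf (t - π / 2), funext hf, cos_add_pi_div_two, sin_add_pi_div_two,
    cos_sub_pi_div_two, sin_sub_pi_div_two]
  refine (((hasDerivAt_cos t).const_mul b).const_add a |>.fun_add
    ((hasDerivAt_sin t).const_mul c)).congr_deriv ?_
  ring

theorem update_add_eq_add_smul_single {ι R : Type*} [DecidableEq ι] [Semiring R] (θ : ι → R)
    (k : ι) (s : R) :
    update θ k (θ k + s) = θ + s • Pi.single k 1 := by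
  ext j
  rcases eq_or_ne j k with rfl | hj <;> simp [*]

theorem DifferentiableAt.hasDerivAt_comp_update {𝕜 ι F : Type*} [NontriviallyNormedField 𝕜]
    [Fintype ι] [DecidableEq ι] [NormedAddCommGroup F] [NormedSpace 𝕜 F] {f : (ι → 𝕜) → F}
    {θ : ι → 𝕜} (hf : DifferentiableAt 𝕜 f θ) (k : ι) :
    HasDerivAt (fun t => f (update θ k t)) (fderiv 𝕜 f θ (Pi.single k 1)) (θ k) := by
  rw [← update_eq_self k θ] at hf
  simpa [comp_def] using hf.hasFDerivAt.comp_hasDerivAt (θ k) (hasDerivAt_update θ k (θ k))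

theorem List.Nodup.exists_prod_map_update_eq {ι M : Type*} [DecidableEq ι] [Monoid M]
    {l : List ι} (hl : l.Nodup) {k : ι} (hk : k ∈ l) (g : ι → M) :
    ∃ A B : M, ∀ m, (l.map (update g k m)).prod = A * m * B := by
  obtain ⟨L, R, rfl⟩ := List.append_of_mem hk
  have hkL : k ∉ L := fun h => List.disjoint_of_nodup_append hl h List.mem_cons_self
  have hkR : k ∉ R := (List.nodup_cons.mp (List.nodup_append.mp hl).2.1).1
  refine ⟨(L.map g).prod, (R.map g).prod, fun m => ?_⟩
  have hoff : ∀ l : List ι, k ∉ l → l.map (update g k m) = l.map g := fun l hl =>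
    List.map_congr_left fun j hj => update_of_ne (ne_of_mem_of_not_mem hj hl) _ _
  simp [hoff L hkL, hoff R hkR, mul_assoc]

section Expectation

variable {m : Type*} [Fintype m]

noncomputable def expectation (H : Matrix m m ℂ) (ψ : m → ℂ) : ℝ :=
  (star ψ ⬝ᵥ (H *ᵥ ψ)).re

theorem isDegreeOneTrigPoly_expectation_cos_sub_sin (H : Matrix m m ℂ) (x y : m → ℂ) :
    IsDegreeOneTrigPoly fun t =>
      expectation H ((cos (t / 2) : ℂ) • x - ((sin (t / 2) : ℂ) * Complex.I) • y) := by
  set α := star x ⬝ᵥ (H *ᵥ x) with hα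
  set β := star x ⬝ᵥ (H *ᵥ y) with hβ
  set γ := star y ⬝ᵥ (H *ᵥ x) with hγ
  set δ := star y ⬝ᵥ (H *ᵥ y) with hδ
  refine ⟨(α.re + δ.re) / 2, (α.re - δ.re) / 2, (β - γ).im / 2, fun t => ?_⟩
  have hcos : cos t = 2 * cos (t / 2) ^ 2 - 1 := by
    rw [← cos_two_mul, mul_div_cancel₀ _ two_ne_zero]
  have hsin : sin t = 2 * sin (t / 2) * cos (t / 2) := by
    rw [← sin_two_mul, mul_div_cancel₀ _ two_ne_zero]
  simp only [expectation, star_sub, star_smul, mulVec_sub, mulVec_smul, sub_dotProduct,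
    dotProduct_sub, smul_dotProduct, dotProduct_smul, smul_eq_mul, star_mul', Complex.star_def,
    Complex.conj_I, Complex.conj_ofReal, ← hα, ← hβ, ← hγ, ← hδ]
  simp only [Complex.sub_re, Complex.mul_re, Complex.ofReal_re, Complex.ofReal_im, Complex.I_re,
    Complex.I_im, Complex.neg_re, Complex.neg_im, Complex.mul_im, Complex.sub_im]
  rw [hcos, hsin]
  linear_combination δ.re * sin_sq_add_cos_sq (t / 2)

end Expectation

section Circuit

attribute [local instance] Matrix.linftyOpNormedRing Matrix.linftyOpNormedAlgebra

variable {m ι : Type*} [Fintype m] [DecidableEq m]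

theorem Matrix.exp_smul_of_mul_self_eq_one {V : Matrix m m ℂ} (hV : V * V = 1) (z : ℂ) :
    NormedSpace.exp (z • V) = Complex.cosh z • (1 : Matrix m m ℂ) + Complex.sinh z • V := by
  -- `(p, q) ↦ p (1 + V)/2 + q (1 - V)/2` is a ring homomorphism since `(1 ± V)/2` are
  -- complementary orthogonal idempotents; it sends `(z, -z)` to `z V`.
  let φ : ℂ × ℂ →+* Matrix m m ℂ :=
  { toFun := fun p => ((p.1 + p.2) / 2) • (1 : Matrix m m ℂ) + ((p.1 - p.2) / 2) • V
    map_one' := by norm_num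
    map_mul' := fun p q => by
      simp only [Prod.fst_mul, Prod.snd_mul, add_mul, mul_add, smul_mul_assoc, mul_smul_comm,
        one_mul, mul_one, hV]
      match_scalars <;> ring
    map_zero' := by norm_num
    map_add' := fun p q => by
      simp only [Prod.fst_add, Prod.snd_add]
      match_scalars <;> ring }
  have hφ : Continuous φ := by
    change Continuous fun p : ℂ × ℂ =>
      ((p.1 + p.2) / 2) • (1 : Matrix m m ℂ) + ((p.1 - p.2) / 2) • V
    fun_prop
  have hzV : φ (z, -z) = z • V := by
    change ((z + -z) / 2) • (1 : Matrix m m ℂ) + ((z - -z) / 2) • V = z • V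
    match_scalars <;> ring
  have hexp : NormedSpace.exp ((z, -z) : ℂ × ℂ) = (Complex.exp z, Complex.exp (-z)) := by
    ext <;> simp [Complex.exp_eq_exp_ℂ]
  have key := NormedSpace.map_exp φ hφ (z, -z)
  rw [hexp, hzV] at key
  refine key.symm.trans ?_
  rw [Complex.cosh, Complex.sinh]
  rfl

noncomputable def rotationGate (W V : Matrix m m ℂ) (t : ℝ) : Matrix m m ℂ :=
  NormedSpace.exp ((-Complex.I * ((t : ℂ) / 2)) • V) * W

theorem rotationGate_eq {V : Matrix m m ℂ} (hV : V * V = 1) (W : Matrix m m ℂ) (t : ℝ) :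
    rotationGate W V t = (cos (t / 2) : ℂ) • W - ((sin (t / 2) : ℂ) * Complex.I) • (V * W) := by
  have hz : -Complex.I * ((t : ℂ) / 2) = ((-(t / 2) : ℝ) : ℂ) * Complex.I := by
    push_cast
    ring
  rw [rotationGate, hz, Matrix.exp_smul_of_mul_self_eq_one hV, Complex.cosh_mul_I,
    Complex.sinh_mul_I, ← Complex.ofReal_cos, ← Complex.ofReal_sin, cos_neg, sin_neg,
    Complex.ofReal_neg, neg_mul, neg_smul, ← sub_eq_add_neg, sub_mul, smul_mul_assoc,
    smul_mul_assoc, one_mul]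

noncomputable def circuit (l : List ι) (W V : ι → Matrix m m ℂ) (θ : ι → ℝ) : Matrix m m ℂ :=
  (l.map fun k => rotationGate (W k) (V k) (θ k)).prod

theorem isDegreeOneTrigPoly_expectation_circuit_update [DecidableEq ι] {l : List ι}
    (hl : l.Nodup) {k : ι} (hk : k ∈ l) (W : ι → Matrix m m ℂ) {V : ι → Matrix m m ℂ}
    (hV : V k * V k = 1) (H : Matrix m m ℂ) (v : m → ℂ) (θ : ι → ℝ) :
    IsDegreeOneTrigPoly fun t => expectation H (circuit l W V (update θ k t) *ᵥ v) := by
  obtain ⟨A, B, hAB⟩ := hl.exists_prod_map_update_eq hk fun j => rotationGate (W j) (V j) (θ j)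
  have hline : ∀ t, circuit l W V (update θ k t) *ᵥ v
      = (cos (t / 2) : ℂ) • ((A * W k * B) *ᵥ v)
        - ((sin (t / 2) : ℂ) * Complex.I) • ((A * (V k * W k) * B) *ᵥ v) := by
    intro t
    have hgates : (fun j => rotationGate (W j) (V j) (update θ k t j))
        = update (fun j => rotationGate (W j) (V j) (θ j)) k (rotationGate (W k) (V k) t) :=
      funext (apply_update (fun j => rotationGate (W j) (V j)) θ k t)
    rw [circuit, hgates, hAB, rotationGate_eq hV, mul_sub, sub_mul, mul_smul_comm, mul_smul_comm,
      smul_mul_assoc, smul_mul_assoc, sub_mulVec, smul_mulVec, smul_mulVec]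
  simpa only [hline] using isDegreeOneTrigPoly_expectation_cos_sub_sin H _ _

theorem differentiable_expectation_circuit [Fintype ι] (W : ι → Matrix m m ℂ)
    {V : ι → Matrix m m ℂ} (hV : ∀ k, V k * V k = 1) (H : Matrix m m ℂ) (v : m → ℂ) (l : List ι) :
    Differentiable ℝ fun θ => expectation H (circuit l W V θ *ᵥ v) := by
  have hgate : ∀ j, Differentiable ℝ fun θ : ι → ℝ => rotationGate (W j) (V j) (θ j) := by
    intro j
    simp_rw [rotationGate_eq (hV j)]
    fun_prop
  have hcircuit : Differentiable ℝ (circuit l W V) := fun θ =>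
    (HasFDerivAt.list_prod' fun j _ => (hgate j θ).hasFDerivAt).differentiableAt
  have hexpectation : Differentiable ℝ fun M : Matrix m m ℂ => expectation H (M *ᵥ v) := by
    unfold expectation dotProduct mulVec dotProduct
    fun_prop
  exact hexpectation.comp hcircuit

end Circuit

theorem stmt1_general (N D : ℕ)
    (W V : Fin D → Matrix (Fin (2 ^ N)) (Fin (2 ^ N)) ℂ)
    (hVinv : ∀ k, V k * V k = 1)
    (H : Matrix (Fin (2 ^ N)) (Fin (2 ^ N)) ℂ)
    (e₀ : Fin (2 ^ N) → ℂ)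
    (U : (Fin D → ℝ) → Matrix (Fin (2 ^ N)) (Fin (2 ^ N)) ℂ)
    (hU : ∀ θ, U θ = ((List.finRange D).reverse.map
        (fun k => NormedSpace.exp ((-Complex.I * ((θ k : ℂ) / 2)) • V k) * W k)).prod)
    (C : (Fin D → ℝ) → ℝ)
    (hC : ∀ θ, (C θ : ℂ) = star (U θ *ᵥ e₀) ⬝ᵥ (H *ᵥ (U θ *ᵥ e₀)))
    (θ : Fin D → ℝ) (k : Fin D) :
    fderiv ℝ C θ (Pi.single k 1) =
      (1 / 2) * (C (θ + (π / 2) • (Pi.single k 1 : Fin D → ℝ)) - C (θ - (π / 2) • (Pi.single k 1 : Fin D → ℝ))) := by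
  set l := (List.finRange D).reverse
  obtain rfl : U = circuit l W V := funext hU
  obtain rfl : C = fun θ => expectation H (circuit l W V θ *ᵥ e₀) :=
    funext fun θ => by rw [expectation, ← hC, Complex.ofReal_re]
  beta_reduce
  have hl : l.Nodup := List.nodup_reverse.mpr (List.nodup_finRange D)
  have hk : k ∈ l := List.mem_reverse.mpr (List.mem_finRange k)
  have hpartial := (differentiable_expectation_circuit W hVinv H e₀ l θ).hasDerivAt_comp_update k
  have hshift :=
    (isDegreeOneTrigPoly_expectation_circuit_update hl hk W (hVinv k) H e₀ θ).hasDerivAt_shift (θ k)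
  rw [hpartial.unique hshift, sub_eq_add_neg θ, ← neg_smul, ← update_add_eq_add_smul_single,
    ← update_add_eq_add_smul_single, ← sub_eq_add_neg]
  ring

/-- For a PQC `U(θ) = ∏_{k=D}^{1} exp(−i(θ_k/2)V_k)·W_k` (factor `k = D`
leftmost) with unitary fixed gates `W_k`, Hermitian involutions `V_k` as rotation axes,
Hermitian observable `H` and cost `C(θ) = ⟨U(θ)e₀, H U(θ)e₀⟩`, the parameter-shift rule
`∂_{θ_k} C(θ) = (1/2)(C(θ + (π/2)e_k) − C(θ − (π/2)e_k))` holds for all `θ` and `k`. -/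
theorem stmt1 (N D : ℕ) (hN : 1 ≤ N) (hD : 1 ≤ D)
    (W V : Fin D → Matrix (Fin (2 ^ N)) (Fin (2 ^ N)) ℂ)
    (hW : ∀ k, (W k)ᴴ * W k = 1 ∧ W k * (W k)ᴴ = 1)
    (hVherm : ∀ k, (V k)ᴴ = V k) (hVinv : ∀ k, V k * V k = 1)
    (H : Matrix (Fin (2 ^ N)) (Fin (2 ^ N)) ℂ) (hH : Hᴴ = H)
    (e₀ : Fin (2 ^ N) → ℂ) (he₀ : e₀ = fun i : Fin (2 ^ N) => if (i : ℕ) = 0 then (1 : ℂ) else 0)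
    (U : (Fin D → ℝ) → Matrix (Fin (2 ^ N)) (Fin (2 ^ N)) ℂ)
    (hU : ∀ θ, U θ = ((List.finRange D).reverse.map
        (fun k => NormedSpace.exp ((-Complex.I * ((θ k : ℂ) / 2)) • V k) * W k)).prod)
    (C : (Fin D → ℝ) → ℝ)
    (hC : ∀ θ, (C θ : ℂ) = star (U θ *ᵥ e₀) ⬝ᵥ (H *ᵥ (U θ *ᵥ e₀)))
    (θ : Fin D → ℝ) (k : Fin D) :
    fderiv ℝ C θ (Pi.single k 1) =
      (1 / 2) * (C (θ + (π / 2) • (Pi.single k 1 : Fin D → ℝ)) - C (θ - (π / 2) • (Pi.single k 1 : Fin D → ℝ))) :=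
  stmt1_general N D W V hVinv H e₀ U hU C hC θ k
end

section
/- Let n ≥ 1, D ≥ 1, let H be a nonzero Hermitian n×n complex matrix, let ε > 0, let e₀ be a unit vector in ℂ^n, and let U : ℝ^D → U(n) be any map into the unitary group which is (ε/(4‖H‖))-state-expressive in the sense that for every pair of unit vectors ψ₀, ψ ∈ ℂ^n there exists θ ∈ ℝ^D with ‖U(θ)·ψ₀ − ψ‖ ≤ ε/(4‖H‖). Define C(θ) := ⟨U(θ)e₀, H·U(θ)e₀⟩ and, for arbitrary unitary matrices Q, Q̃ ∈ U(n), the transformed cost C̃(θ) := ⟨Q̃·U(θ)·Q·e₀, H·Q̃·U(θ)·Q·e₀⟩. Then | inf_{θ∈ℝ^D} C(θ) − inf_{θ∈ℝ^D} C̃(θ) | ≤ ε. (Hence the Linear Clifford Encoder transformation does not compromise the quality of the global minimum of the optimization landscape.) -/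
open Matrix

/-- The action of an `n × n` complex matrix on the Euclidean space `ℂ^n` (with the standard
Hermitian inner product), as a continuous linear map. -/
noncomputable def matAct {n : ℕ} (M : Matrix (Fin n) (Fin n) ℂ)
    (v : EuclideanSpace ℂ (Fin n)) : EuclideanSpace ℂ (Fin n) :=
  Matrix.toEuclideanCLM (𝕜 := ℂ) M v

/-- The operator norm of an `n × n` complex matrix acting on Euclidean space `ℂ^n`. -/
noncomputable def matOpNorm {n : ℕ} (M : Matrix (Fin n) (Fin n) ℂ) : ℝ :=
  ‖Matrix.toEuclideanCLM (𝕜 := ℂ) M‖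

/-!
The cost `ψ ↦ re ⟪ψ, H ψ⟫` is `2‖H‖`-Lipschitz on the unit sphere, so replacing a state by one
within `ε / (4‖H‖)` changes the cost by at most `ε / 2`. Every state `Q̃ U(θ) Q e₀` of the
transformed ansatz is that close to some `U(θ') e₀` (expressivity from `e₀`), and every
`U(θ) e₀` is that close to some `Q̃ U(θ') Q e₀` (expressivity from `Q e₀` towards
`Q̃ᴴ U(θ) e₀`, then apply the isometry `Q̃`). Hence each infimum exceeds the other by at
most `ε / 2`.
-/

theorem ciInf_le_ciInf_add_of_forall_exists_le {ι κ : Type*} [Nonempty ι] {f : κ → ℝ}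
    {g : ι → ℝ} (hf : BddBelow (Set.range f)) {δ : ℝ} (h : ∀ i, ∃ j, f j ≤ g i + δ) :
    ⨅ j, f j ≤ (⨅ i, g i) + δ := by
  refine sub_le_iff_le_add.mp (le_ciInf fun i => ?_)
  obtain ⟨j, hj⟩ := h i
  linarith [ciInf_le hf j]

theorem abs_ciInf_sub_ciInf_le {ι κ : Type*} [Nonempty ι] [Nonempty κ] {f : κ → ℝ}
    {g : ι → ℝ} (hf : BddBelow (Set.range f)) (hg : BddBelow (Set.range g)) {δ : ℝ}
    (hfg : ∀ i, ∃ j, f j ≤ g i + δ) (hgf : ∀ j, ∃ i, g i ≤ f j + δ) :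
    |(⨅ j, f j) - ⨅ i, g i| ≤ δ := by
  have h₁ := ciInf_le_ciInf_add_of_forall_exists_le hf hfg
  have h₂ := ciInf_le_ciInf_add_of_forall_exists_le hg hgf
  rw [abs_le]
  constructor <;> linarith

namespace ContinuousLinearMap

variable {𝕜 E : Type*} [RCLike 𝕜] [NormedAddCommGroup E] [InnerProductSpace 𝕜 E]

theorem abs_reApplyInnerSelf_le (T : E →L[𝕜] E) (x : E) :
    |T.reApplyInnerSelf x| ≤ ‖T‖ * ‖x‖ ^ 2 := by
  grw [reApplyInnerSelf_apply, RCLike.abs_re_le_norm, norm_inner_le_norm, le_opNorm, mul_assoc,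
    ← sq]

theorem abs_reApplyInnerSelf_sub_le (T : E →L[𝕜] E) (x y : E) :
    |T.reApplyInnerSelf x - T.reApplyInnerSelf y| ≤ ‖T‖ * (‖x‖ + ‖y‖) * ‖x - y‖ := by
  have hsplit : inner 𝕜 (T x) x - inner 𝕜 (T y) y
      = inner 𝕜 (T (x - y)) x + inner 𝕜 (T y) (x - y) := by
    simp only [map_sub, inner_sub_left, inner_sub_right]
    ring
  calc |T.reApplyInnerSelf x - T.reApplyInnerSelf y|
      = |RCLike.re (inner 𝕜 (T (x - y)) x + inner 𝕜 (T y) (x - y))| := by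
        rw [reApplyInnerSelf_apply, reApplyInnerSelf_apply, ← map_sub, hsplit]
    _ ≤ ‖T‖ * ‖x - y‖ * ‖x‖ + ‖T‖ * ‖y‖ * ‖x - y‖ := by
        grw [RCLike.abs_re_le_norm, norm_add_le, norm_inner_le_norm, norm_inner_le_norm,
          le_opNorm, le_opNorm]
    _ = ‖T‖ * (‖x‖ + ‖y‖) * ‖x - y‖ := by ring

theorem bddBelow_range_reApplyInnerSelf (T : E →L[𝕜] E) {ι : Type*} {f : ι → E}
    (hf : ∀ i, ‖f i‖ = 1) : BddBelow (Set.range fun i => T.reApplyInnerSelf (f i)) := by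
  refine ⟨-‖T‖, ?_⟩
  rintro _ ⟨i, rfl⟩
  have := T.abs_reApplyInnerSelf_le (f i)
  rw [hf, one_pow, mul_one] at this
  exact neg_le_of_abs_le this

theorem reApplyInnerSelf_le_add_of_norm_sub_le (T : E →L[𝕜] E) {x y : E} (hx : ‖x‖ = 1)
    (hy : ‖y‖ = 1) {ε : ℝ} (hε : 0 ≤ ε) (h : ‖x - y‖ ≤ ε / (4 * ‖T‖)) :
    T.reApplyInnerSelf x ≤ T.reApplyInnerSelf y + ε / 2 := by
  have hstep : ‖T‖ * (1 + 1) * (ε / (4 * ‖T‖)) ≤ ε / 2 := by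
    rcases (norm_nonneg T).eq_or_lt with hT | hT
    · rw [← hT, zero_mul, zero_mul]; positivity
    · rw [mul_div_assoc', div_le_div_iff₀ (by positivity) two_pos]; nlinarith
  have hlip := T.abs_reApplyInnerSelf_sub_le x y
  rw [hx, hy] at hlip
  grw [h, hstep] at hlip
  linarith [le_abs_self (T.reApplyInnerSelf x - T.reApplyInnerSelf y)]

end ContinuousLinearMap

section matAct

variable {n : ℕ}

theorem matAct_mul (A B : Matrix (Fin n) (Fin n) ℂ) (v : EuclideanSpace ℂ (Fin n)) :
    matAct (A * B) v = matAct A (matAct B v) := by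
  simp [matAct]

theorem norm_matAct_of_conjTranspose_mul_self {M : Matrix (Fin n) (Fin n) ℂ} (hM : Mᴴ * M = 1)
    (v : EuclideanSpace ℂ (Fin n)) : ‖matAct M v‖ = ‖v‖ := by
  refine (ContinuousLinearMap.norm_map_iff_adjoint_comp_self _).mpr ?_ v
  rw [← ContinuousLinearMap.star_eq_adjoint, ← map_star, ← ContinuousLinearMap.mul_def,
    ← map_mul, star_eq_conjTranspose, hM, map_one]

theorem norm_matAct_sub_eq {M : Matrix (Fin n) (Fin n) ℂ} (hM : Mᴴ * M = 1 ∧ M * Mᴴ = 1)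
    (v w : EuclideanSpace ℂ (Fin n)) : ‖matAct M v - w‖ = ‖v - matAct Mᴴ w‖ := by
  have hw : matAct M (matAct Mᴴ w) = w := by
    rw [← matAct_mul, hM.2]
    simp [matAct]
  conv_lhs => rw [← hw]
  rw [← norm_matAct_of_conjTranspose_mul_self hM.1 (v - matAct Mᴴ w)]
  simp only [matAct, map_sub]

theorem re_inner_matAct_self (H : Matrix (Fin n) (Fin n) ℂ) (ψ : EuclideanSpace ℂ (Fin n)) :
    (inner ℂ ψ (matAct H ψ)).re = (toEuclideanCLM (𝕜 := ℂ) H).reApplyInnerSelf ψ :=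
  inner_re_symm (𝕜 := ℂ) _ _

end matAct

theorem stmt18_general (n D : ℕ)
    (H : Matrix (Fin n) (Fin n) ℂ)
    (ε : ℝ) (hε : 0 < ε)
    (e₀ : EuclideanSpace ℂ (Fin n)) (he₀ : ‖e₀‖ = 1)
    (U : (Fin D → ℝ) → Matrix (Fin n) (Fin n) ℂ)
    (hU : ∀ θ, (U θ)ᴴ * U θ = 1 ∧ U θ * (U θ)ᴴ = 1)
    (hexpr : ∀ ψ₀ ψ : EuclideanSpace ℂ (Fin n), ‖ψ₀‖ = 1 → ‖ψ‖ = 1 →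
      ∃ θ : Fin D → ℝ, ‖matAct (U θ) ψ₀ - ψ‖ ≤ ε / (4 * matOpNorm H))
    (Q Qt : Matrix (Fin n) (Fin n) ℂ)
    (hQ : Qᴴ * Q = 1 ∧ Q * Qᴴ = 1) (hQt : Qtᴴ * Qt = 1 ∧ Qt * Qtᴴ = 1) :
    |(⨅ θ : Fin D → ℝ,
        ((inner ℂ (matAct (U θ) e₀) (matAct H (matAct (U θ) e₀)) : ℂ)).re) -
      (⨅ θ : Fin D → ℝ,
        ((inner ℂ (matAct (Qt * U θ * Q) e₀)
            (matAct H (matAct (Qt * U θ * Q) e₀)) : ℂ)).re)| ≤ ε := by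
  set T := toEuclideanCLM (𝕜 := ℂ) H
  simp only [re_inner_matAct_self]
  have hψ θ : ‖matAct (U θ) e₀‖ = 1 := by
    rw [norm_matAct_of_conjTranspose_mul_self (hU θ).1, he₀]
  have hψt θ : ‖matAct (Qt * U θ * Q) e₀‖ = 1 := by
    rw [matAct_mul, matAct_mul, norm_matAct_of_conjTranspose_mul_self hQt.1,
      norm_matAct_of_conjTranspose_mul_self (hU θ).1, norm_matAct_of_conjTranspose_mul_self hQ.1,
      he₀]
  refine (abs_ciInf_sub_ciInf_le (δ := ε / 2) (T.bddBelow_range_reApplyInnerSelf hψ)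
    (T.bddBelow_range_reApplyInnerSelf hψt) (fun θ => ?_) (fun θ => ?_)).trans
    (by linarith)
  · obtain ⟨θ', h⟩ := hexpr e₀ _ he₀ (hψt θ)
    exact ⟨θ', T.reApplyInnerSelf_le_add_of_norm_sub_le (hψ θ') (hψt θ) hε.le h⟩
  · have hQe₀ : ‖matAct Q e₀‖ = 1 := by rw [norm_matAct_of_conjTranspose_mul_self hQ.1, he₀]
    have hQtψ : ‖matAct Qtᴴ (matAct (U θ) e₀)‖ = 1 := by
      rw [norm_matAct_of_conjTranspose_mul_self (by rw [conjTranspose_conjTranspose, hQt.2]),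
        hψ θ]
    obtain ⟨θ', h⟩ := hexpr _ _ hQe₀ hQtψ
    refine ⟨θ', T.reApplyInnerSelf_le_add_of_norm_sub_le (hψt θ') (hψ θ) hε.le ?_⟩
    rwa [matAct_mul, matAct_mul, norm_matAct_sub_eq hQt]

/-- Let `H ≠ 0` be Hermitian, `ε > 0`, `e₀` a unit vector, and let
`U : ℝ^D → U(n)` be `(ε/(4‖H‖))`-state-expressive: for all unit vectors `ψ₀, ψ` there is a
`θ` with `‖U(θ)ψ₀ − ψ‖ ≤ ε/(4‖H‖)`.  With `C(θ) := ⟨U(θ)e₀, H U(θ)e₀⟩` and, for arbitrary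
unitaries `Q, Q̃`, `C̃(θ) := ⟨Q̃U(θ)Q e₀, H Q̃U(θ)Q e₀⟩`, one has
`|inf C − inf C̃| ≤ ε`: the LCE transformation preserves the global minimum quality. -/
theorem stmt18 (n D : ℕ) (hn : 1 ≤ n) (hD : 1 ≤ D)
    (H : Matrix (Fin n) (Fin n) ℂ) (hHherm : Hᴴ = H) (hH0 : H ≠ 0)
    (ε : ℝ) (hε : 0 < ε)
    (e₀ : EuclideanSpace ℂ (Fin n)) (he₀ : ‖e₀‖ = 1)
    (U : (Fin D → ℝ) → Matrix (Fin n) (Fin n) ℂ)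
    (hU : ∀ θ, (U θ)ᴴ * U θ = 1 ∧ U θ * (U θ)ᴴ = 1)
    (hexpr : ∀ ψ₀ ψ : EuclideanSpace ℂ (Fin n), ‖ψ₀‖ = 1 → ‖ψ‖ = 1 →
      ∃ θ : Fin D → ℝ, ‖matAct (U θ) ψ₀ - ψ‖ ≤ ε / (4 * matOpNorm H))
    (Q Qt : Matrix (Fin n) (Fin n) ℂ)
    (hQ : Qᴴ * Q = 1 ∧ Q * Qᴴ = 1) (hQt : Qtᴴ * Qt = 1 ∧ Qt * Qtᴴ = 1) :
    |(⨅ θ : Fin D → ℝ,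
        ((inner ℂ (matAct (U θ) e₀) (matAct H (matAct (U θ) e₀)) : ℂ)).re) -
      (⨅ θ : Fin D → ℝ,
        ((inner ℂ (matAct (Qt * U θ * Q) e₀)
            (matAct H (matAct (Qt * U θ * Q) e₀)) : ℂ)).re)| ≤ ε :=
  stmt18_general n D H ε hε e₀ he₀ U hU hexpr Q Qt hQ hQt
end
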